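/- Let (S, μ, η) be a monad on C. The assignments ∂ ↦ λ^∂, with λ^∂_A := ⟨S(π₁), S(π₁+π₄)∘∂_{A×A}⟩, and λ ↦ ∂^λ, with ∂^λ_A := π₂∘λ_{A×A}∘S(⟨⟨1_A,0⟩,⟨0,1_A⟩⟩), are mutually inverse bijections between the set of differential combinator transformations on (S, μ, η) and the set of 𝔹-distributive laws for (S, μ, η). -/

import Mathlib

open CategoryTheory CategoryTheory.Limits

universe v u

variable {C : Type u} [Category.{v} C] [Preadditive C] [HasBinaryBiproducts C]

/-- A differential combinator transformation on a monad `S`. -/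
structure DiffCombTrans (S : Monad C) where
  d : ∀ A : C, S.obj A ⟶ S.obj (A ⊞ A)
  natural : ∀ {A B : C} (f : A ⟶ B), S.map f ≫ d B = d A ≫ S.map (biprod.map f f)
  dc1 : ∀ A : C, d A ≫ S.map biprod.fst = 0
  dc2 : ∀ A : C,
    d A ≫ S.map (biprod.lift biprod.fst (biprod.lift biprod.snd biprod.snd)) =
      d A ≫ S.map (biprod.lift biprod.fst (biprod.lift biprod.snd 0)) +
      d A ≫ S.map (biprod.lift biprod.fst (biprod.lift 0 biprod.snd))
  dc3 : ∀ A : C, S.η.app A ≫ d A = biprod.lift 0 (𝟙 A) ≫ S.η.app (A ⊞ A)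
  dc4 : ∀ A : C, S.μ.app A ≫ d A =
    d (S.obj A) ≫
      S.map (biprod.fst ≫ S.map (biprod.lift (𝟙 A) 0) + biprod.snd ≫ d A) ≫
      S.μ.app (A ⊞ A)
  dc5 : ∀ A : C, d A ≫ d (A ⊞ A) ≫
      S.map (biprod.lift (biprod.fst ≫ biprod.fst) (biprod.snd ≫ biprod.snd)) = d A
  dc6 : ∀ A : C, d A ≫ d (A ⊞ A) ≫
      S.map (biprod.lift
        (biprod.lift (biprod.fst ≫ biprod.fst) (biprod.snd ≫ biprod.fst))
        (biprod.lift (biprod.fst ≫ biprod.snd) (biprod.snd ≫ biprod.snd))) =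
      d A ≫ d (A ⊞ A)

/-- `λ_A := ⟨S(π₁), S(π₁+π₄) ∘ ∂_{A×A}⟩ : S(A×A) ⟶ S(A) × S(A)`. -/
noncomputable def lamOf (S : Monad C) (p : DiffCombTrans S) (A : C) :
    S.obj (A ⊞ A) ⟶ S.obj A ⊞ S.obj A :=
  biprod.lift (S.map biprod.fst)
    (p.d (A ⊞ A) ≫ S.map (biprod.fst ≫ biprod.fst + biprod.snd ≫ biprod.snd))

/-- the vertical lift `⟨π₁,0,0,π₂⟩ : X × X ⟶ (X × X) × (X × X)`. -/
noncomputable def vertLift (X : C) : X ⊞ X ⟶ (X ⊞ X) ⊞ (X ⊞ X) :=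
  biprod.lift (biprod.lift biprod.fst 0) (biprod.lift 0 biprod.snd)

/-- the canonical flip `⟨π₁,π₃,π₂,π₄⟩ : (X × X) × (X × X) ⟶ (X × X) × (X × X)`. -/
noncomputable def canFlip (X : C) : (X ⊞ X) ⊞ (X ⊞ X) ⟶ (X ⊞ X) ⊞ (X ⊞ X) :=
  biprod.lift (biprod.lift (biprod.fst ≫ biprod.fst) (biprod.snd ≫ biprod.fst))
    (biprod.lift (biprod.fst ≫ biprod.snd) (biprod.snd ≫ biprod.snd))

/-- A `𝔹`-distributive law for a monad `S`. -/
structure BDistLaw (S : Monad C) where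
  lam : ∀ A : C, S.obj (A ⊞ A) ⟶ S.obj A ⊞ S.obj A
  natural : ∀ {A B : C} (f : A ⟶ B),
    S.map (biprod.map f f) ≫ lam B = lam A ≫ biprod.map (S.map f) (S.map f)
  comm_mu : ∀ A : C, S.μ.app (A ⊞ A) ≫ lam A =
    S.map (lam A) ≫ lam (S.obj A) ≫ biprod.map (S.μ.app A) (S.μ.app A)
  comm_eta : ∀ A : C, S.η.app (A ⊞ A) ≫ lam A = biprod.map (S.η.app A) (S.η.app A)
  proj : ∀ A : C, lam A ≫ biprod.fst = S.map biprod.fst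
  zero : ∀ A : C, S.map (biprod.lift (𝟙 A) 0) ≫ lam A = biprod.lift (𝟙 (S.obj A)) 0
  sum : ∀ A : C, S.map (biprod.lift biprod.fst
      (biprod.snd ≫ biprod.fst + biprod.snd ≫ biprod.snd)) ≫ lam A =
    biprod.lift (S.map biprod.fst)
      (S.map (biprod.lift biprod.fst (biprod.snd ≫ biprod.fst)) ≫ lam A ≫ biprod.snd +
        S.map (biprod.lift biprod.fst (biprod.snd ≫ biprod.snd)) ≫ lam A ≫ biprod.snd)
  vlift : ∀ A : C, lam A ≫ vertLift (S.obj A) =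
    S.map (vertLift A) ≫ lam (A ⊞ A) ≫ biprod.map (lam A) (lam A)
  cflip : ∀ A : C, lam (A ⊞ A) ≫ biprod.map (lam A) (lam A) ≫ canFlip (S.obj A) =
    S.map (canFlip A) ≫ lam (A ⊞ A) ≫ biprod.map (lam A) (lam A)

/-- `∂_A := π₂ ∘ λ_{A×A} ∘ S(⟨1_A,0,0,1_A⟩) : S(A) ⟶ S(A×A)`. -/
noncomputable def partialOf (S : Monad C) (l : BDistLaw S) (A : C) :
    S.obj A ⟶ S.obj (A ⊞ A) :=
  S.map (biprod.lift (biprod.lift (𝟙 A) 0) (biprod.lift 0 (𝟙 A))) ≫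
    l.lam (A ⊞ A) ≫ biprod.snd

/-! A differential combinator `∂` and a `𝔹`-distributive law `λ` both give, for `f g : Z ⟶ Y`, a
directional derivative `S(Z) ⟶ S(Y)`: `S(f∘π₁ + g∘π₂) ∘ ∂_Z` (differentiate, then substitute `f`
for the point and `g` for the direction) and `π₂ ∘ λ_Y ∘ S⟨f, g⟩` respectively. The two
constructions are made so that `λ^∂` has the derivative of `∂` and `∂^λ` that of `λ`, and every
axiom becomes a statement about derivatives, checked coordinatewise: linearity in the direction is
[DC.1–2] on one side and (iii)–(iv) on the other, [DC.3–4] match (i), and [DC.5], [DC.6] are the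
second-order entries of (v) and (vi), because `π₂ ∘ λ ∘ π₂ ∘ λ_{A×A}` is `∂` applied twice; the
mixed entries of (v) vanish by [DC.1]. The round trips reduce to `⟨1,0⟩∘π₁ + ⟨0,1⟩∘π₂ = 1` and
`⟨π₁, π₂⟩ = 1`. -/

@[simp] lemma biprod.lift_fst_snd (X Y : C) : biprod.lift biprod.fst biprod.snd = 𝟙 (X ⊞ Y) := by
  ext <;> simp

@[simp] lemma biprod.comp_lift {W X Y Z : C} (f : W ⟶ X) (g : X ⟶ Y) (h : X ⟶ Z) :
    f ≫ biprod.lift g h = biprod.lift (f ≫ g) (f ≫ h) := by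
  ext <;> simp

lemma biprod.map_eq_lift {W X Y Z : C} (f : W ⟶ Y) (g : X ⟶ Z) :
    biprod.map f g = biprod.lift (biprod.fst ≫ f) (biprod.snd ≫ g) := by
  ext <;> simp

namespace DiffCombTrans

variable {S : Monad C} (p : DiffCombTrans S)

@[ext] lemma ext {p q : DiffCombTrans S} (h : p.d = q.d) : p = q := by
  cases p; cases q; cases h; rfl

lemma map_d_map {X Y Z : C} (f : X ⟶ Y) (g : Y ⊞ Y ⟶ Z) :
    S.map f ≫ p.d Y ≫ S.map g = p.d X ≫ S.map (biprod.map f f ≫ g) := by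
  rw [reassoc_of% p.natural f, Functor.map_comp]

lemma map_d_d {X Y : C} (f : X ⟶ Y) :
    S.map f ≫ p.d Y ≫ p.d (Y ⊞ Y) =
      p.d X ≫ p.d (X ⊞ X) ≫ S.map (biprod.map (biprod.map f f) (biprod.map f f)) := by
  rw [reassoc_of% p.natural f, p.natural]

lemma d_map_desc_zero {X Y : C} (f : X ⟶ Y) : p.d X ≫ S.map (biprod.desc f 0) = 0 := by
  rw [show biprod.desc f 0 = biprod.fst ≫ f by ext <;> simp, Functor.map_comp,
    reassoc_of% p.dc1, zero_comp]

lemma d_map_desc_add {X Y : C} (f g h : X ⟶ Y) :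
    p.d X ≫ S.map (biprod.desc f (g + h)) =
      p.d X ≫ S.map (biprod.desc f g) + p.d X ≫ S.map (biprod.desc f h) := by
  simpa [biprod.desc_eq, ← Functor.map_comp] using
    p.dc2 X =≫ S.map (biprod.desc f (biprod.desc g h))

lemma lamOf_fst (A : C) : lamOf S p A ≫ biprod.fst = S.map biprod.fst :=
  biprod.lift_fst _ _

lemma lamOf_snd (A : C) :
    lamOf S p A ≫ biprod.snd = p.d (A ⊞ A) ≫ S.map (biprod.desc biprod.fst biprod.snd) := by
  rw [lamOf, biprod.lift_snd, biprod.desc_eq]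

lemma map_lift_lamOf_snd {Z A : C} (f g : Z ⟶ A) :
    S.map (biprod.lift f g) ≫ lamOf S p A ≫ biprod.snd = p.d Z ≫ S.map (biprod.desc f g) := by
  rw [lamOf_snd, map_d_map]
  congr 2
  ext <;> simp

lemma lamOf_comp_map_lamOf (A : C) :
    lamOf S p (A ⊞ A) ≫ biprod.map (lamOf S p A) (lamOf S p A) =
      biprod.lift
        (biprod.lift (S.map (biprod.fst ≫ biprod.fst))
          (p.d _ ≫ S.map (biprod.desc (biprod.fst ≫ biprod.fst) (biprod.fst ≫ biprod.snd))))
        (biprod.lift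
          (p.d _ ≫ S.map (biprod.desc (biprod.fst ≫ biprod.fst) (biprod.snd ≫ biprod.fst)))
          (p.d _ ≫ p.d _ ≫ S.map (biprod.map (biprod.desc biprod.fst biprod.snd)
            (biprod.desc biprod.fst biprod.snd) ≫ biprod.desc biprod.fst biprod.snd))) := by
  ext <;> simp only [Category.assoc, biprod.map_fst_assoc, biprod.map_snd_assoc, biprod.lift_fst,
    biprod.lift_snd]
  · rw [reassoc_of% lamOf_fst, lamOf_fst, ← Functor.map_comp]
  · rw [reassoc_of% lamOf_fst, lamOf_snd, map_d_map]
    congr 2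
    ext <;> simp
  · rw [reassoc_of% lamOf_snd, lamOf_fst, ← Functor.map_comp]
    congr 2
    ext <;> simp
  · rw [reassoc_of% lamOf_snd, lamOf_snd, reassoc_of% p.natural, ← Functor.map_comp]

lemma lamOf_comp_vertLift (A : C) :
    lamOf S p A ≫ vertLift (S.obj A) =
      S.map (vertLift A) ≫ lamOf S p (A ⊞ A) ≫ biprod.map (lamOf S p A) (lamOf S p A) := by
  rw [lamOf_comp_map_lamOf]
  ext <;> simp only [Category.assoc, biprod.lift_fst, biprod.lift_snd] <;>
    conv_lhs => simp only [vertLift, biprod.lift_fst_assoc, biprod.lift_snd_assoc, biprod.lift_fst,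
      biprod.lift_snd, zero_comp, comp_zero]
  · rw [lamOf_fst, ← Functor.map_comp]
    congr 1
    simp [vertLift]
  · rw [map_d_map, ← p.d_map_desc_zero biprod.fst]
    congr 2
    ext <;> simp [vertLift]
  · rw [map_d_map, ← p.d_map_desc_zero biprod.fst]
    congr 2
    ext <;> simp [vertLift]
  · rw [lamOf_snd, reassoc_of% map_d_d, ← reassoc_of% (p.dc5 (A ⊞ A)),
      ← Functor.map_comp, ← Functor.map_comp]
    congr 3
    ext <;> simp [vertLift]

lemma lamOf_comp_map_lamOf_comp_canFlip (A : C) :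
    lamOf S p (A ⊞ A) ≫ biprod.map (lamOf S p A) (lamOf S p A) ≫ canFlip (S.obj A) =
      S.map (canFlip A) ≫ lamOf S p (A ⊞ A) ≫ biprod.map (lamOf S p A) (lamOf S p A) := by
  rw [reassoc_of% (lamOf_comp_map_lamOf p A), lamOf_comp_map_lamOf]
  ext <;> simp only [Category.assoc, biprod.lift_fst, biprod.lift_snd] <;>
    conv_lhs => simp only [canFlip, biprod.lift_fst_assoc, biprod.lift_snd_assoc, biprod.lift_fst,
      biprod.lift_snd]
  · rw [← Functor.map_comp]
    congr 1
    simp [canFlip]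
  · rw [map_d_map]
    congr 2
    ext <;> simp [canFlip]
  · rw [map_d_map]
    congr 2
    ext <;> simp [canFlip]
  · rw [reassoc_of% map_d_d, ← reassoc_of% (p.dc6 ((A ⊞ A) ⊞ (A ⊞ A))), ← Functor.map_comp,
      ← Functor.map_comp]
    congr 3
    ext <;> simp [canFlip, biprod.map_eq_lift]

noncomputable def toBDistLaw : BDistLaw S where
  lam := lamOf S p
  natural {A B} f := by
    ext
    · simp only [Category.assoc, lamOf_fst, biprod.map_fst, reassoc_of% lamOf_fst,
        ← Functor.map_comp]
    · rw [Category.assoc, Category.assoc, biprod.map_snd, reassoc_of% lamOf_snd,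
        ← Functor.map_comp, biprod.map_eq_lift, map_lift_lamOf_snd]
      congr 2
      ext <;> simp
  comm_mu A := by
    ext
    · rw [Category.assoc, Category.assoc, Category.assoc, biprod.map_fst, reassoc_of% lamOf_fst,
        ← Functor.map_comp_assoc, lamOf_fst, ← S.μ.naturality, Functor.comp_map]
    · rw [Category.assoc, Category.assoc, Category.assoc, biprod.map_snd, lamOf_snd,
        reassoc_of% p.dc4, ← S.μ.naturality, Functor.comp_map, ← Functor.map_comp_assoc,
        lamOf, reassoc_of% map_lift_lamOf_snd]
      congr 3
      ext <;> simp [biprod.desc_eq, ← Functor.map_comp]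
  comm_eta A := by
    ext
    · rw [Category.assoc, lamOf_fst, biprod.map_fst, ← S.η.naturality]
      rfl
    · rw [Category.assoc, lamOf_snd, reassoc_of% (p.dc3 (A ⊞ A)), biprod.map_snd,
        ← S.η.naturality, Functor.id_map, ← Category.assoc]
      congr 1
      ext <;> simp
  proj := lamOf_fst p
  zero A := by
    ext
    · simp [lamOf_fst, ← Functor.map_comp]
    · rw [Category.assoc, map_lift_lamOf_snd, d_map_desc_zero, biprod.lift_snd]
  sum A := by
    ext
    · simp [lamOf_fst, ← Functor.map_comp]
    · simp only [Category.assoc, biprod.lift_snd, map_lift_lamOf_snd, d_map_desc_add]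
  vlift := lamOf_comp_vertLift p
  cflip := lamOf_comp_map_lamOf_comp_canFlip p

end DiffCombTrans

namespace BDistLaw

variable {S : Monad C} (l : BDistLaw S)

@[ext] lemma ext {l m : BDistLaw S} (h : l.lam = m.lam) : l = m := by
  cases l; cases m; cases h; rfl

lemma lam_snd_map {X Y : C} (f : X ⟶ Y) :
    l.lam X ≫ biprod.snd ≫ S.map f = S.map (biprod.map f f) ≫ l.lam Y ≫ biprod.snd := by
  rw [← biprod.map_snd (S.map f), reassoc_of% l.natural]

lemma map_lift_zero_lam_snd {Z X : C} (f : Z ⟶ X) :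
    S.map (biprod.lift f 0) ≫ l.lam X ≫ biprod.snd = 0 := by
  rw [show biprod.lift f (0 : Z ⟶ X) = f ≫ biprod.lift (𝟙 X) 0 by ext <;> simp,
    Functor.map_comp, Category.assoc, reassoc_of% l.zero, biprod.lift_snd, comp_zero]

lemma map_lift_add_lam_snd {Z X : C} (f g h : Z ⟶ X) :
    S.map (biprod.lift f (g + h)) ≫ l.lam X ≫ biprod.snd =
      S.map (biprod.lift f g) ≫ l.lam X ≫ biprod.snd +
        S.map (biprod.lift f h) ≫ l.lam X ≫ biprod.snd := by
  simpa only [Category.assoc, biprod.lift_snd, Preadditive.comp_add, ← Functor.map_comp_assoc,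
    biprod.comp_lift, biprod.lift_fst, biprod.lift_snd_assoc] using
    S.map (biprod.lift f (biprod.lift g h)) ≫= l.sum X =≫ biprod.snd

lemma partialOf_map_desc {Z X : C} (f g : Z ⟶ X) :
    partialOf S l Z ≫ S.map (biprod.desc f g) = S.map (biprod.lift f g) ≫ l.lam X ≫ biprod.snd := by
  rw [partialOf, Category.assoc, Category.assoc, lam_snd_map, ← Functor.map_comp_assoc]
  congr 2
  ext <;> simp

lemma partialOf_map_desc_zero {Z X : C} (f : Z ⟶ X) :
    partialOf S l Z ≫ S.map (biprod.desc f 0) = 0 := by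
  rw [partialOf_map_desc, map_lift_zero_lam_snd]

lemma partialOf_map_desc_add {Z X : C} (f g h : Z ⟶ X) :
    partialOf S l Z ≫ S.map (biprod.desc f (g + h)) =
      partialOf S l Z ≫ S.map (biprod.desc f g) + partialOf S l Z ≫ S.map (biprod.desc f h) := by
  rw [partialOf_map_desc, partialOf_map_desc, partialOf_map_desc, map_lift_add_lam_snd]

lemma map_lift_lam_eq_lift_partialOf (A : C) :
    S.map (biprod.lift (biprod.lift (𝟙 A) 0) (biprod.lift 0 (𝟙 A))) ≫ l.lam (A ⊞ A) =
      biprod.lift (S.map (biprod.lift (𝟙 A) 0)) (partialOf S l A) := by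
  ext
  · rw [Category.assoc, l.proj, ← Functor.map_comp, biprod.lift_fst, biprod.lift_fst]
  · rw [Category.assoc, biprod.lift_snd, partialOf]

lemma partialOf_comp_partialOf (A : C) :
    partialOf S l A ≫ partialOf S l (A ⊞ A) =
      S.map (biprod.lift (biprod.lift (𝟙 A) 0) (biprod.lift 0 (𝟙 A)) ≫
        biprod.map (biprod.lift (biprod.lift (𝟙 (A ⊞ A)) 0) (biprod.lift 0 (𝟙 (A ⊞ A))))
          (biprod.lift (biprod.lift (𝟙 (A ⊞ A)) 0) (biprod.lift 0 (𝟙 (A ⊞ A))))) ≫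
        l.lam _ ≫ biprod.snd ≫ l.lam _ ≫ biprod.snd := by
  rw [partialOf, partialOf, Category.assoc, Category.assoc, reassoc_of% lam_snd_map,
    Functor.map_comp_assoc]

noncomputable def toDiffCombTrans : DiffCombTrans S where
  d := partialOf S l
  natural {A B} f := by
    rw [show biprod.map f f = biprod.desc (f ≫ biprod.inl) (f ≫ biprod.inr) by ext <;> simp,
      partialOf_map_desc, partialOf, ← Functor.map_comp_assoc]
    congr 2
    ext <;> simp
  dc1 A := by
    rw [show (biprod.fst : A ⊞ A ⟶ A) = biprod.desc (𝟙 A) 0 by ext <;> simp,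
      partialOf_map_desc_zero]
  dc2 A := by
    rw [show biprod.lift biprod.fst (biprod.lift biprod.snd biprod.snd) =
        biprod.desc biprod.inl (biprod.inl ≫ biprod.inr + biprod.inr ≫ biprod.inr) by
          ext <;> simp,
      show biprod.lift biprod.fst (biprod.lift biprod.snd 0) =
        biprod.desc (biprod.inl : A ⟶ A ⊞ (A ⊞ A)) (biprod.inl ≫ biprod.inr) by ext <;> simp,
      show biprod.lift biprod.fst (biprod.lift 0 biprod.snd) =
        biprod.desc (biprod.inl : A ⟶ A ⊞ (A ⊞ A)) (biprod.inr ≫ biprod.inr) by ext <;> simp,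
      partialOf_map_desc_add]
  dc3 A := by
    rw [partialOf, ← Category.assoc, ← S.η.naturality, Functor.id_map, Category.assoc,
      reassoc_of% l.comm_eta, biprod.map_snd, biprod.lift_snd_assoc]
  dc4 A := by
    rw [← biprod.desc_eq, reassoc_of% partialOf_map_desc, ← map_lift_lam_eq_lift_partialOf,
      partialOf, ← Category.assoc, ← S.μ.naturality, Functor.comp_map, Category.assoc,
      reassoc_of% l.comm_mu, biprod.map_snd, Functor.map_comp_assoc]
  dc5 A := by
    have hv := l.vlift (A ⊞ A) =≫ (biprod.snd ≫ biprod.snd)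
    simp only [Category.assoc, vertLift, biprod.lift_snd_assoc, biprod.lift_snd,
      biprod.map_snd_assoc] at hv
    rw [reassoc_of% partialOf_comp_partialOf, lam_snd_map, reassoc_of% lam_snd_map,
      ← Functor.map_comp_assoc]
    conv_rhs => rw [partialOf, hv]
    rw [← Functor.map_comp_assoc]
    congr 2
    ext <;> simp
  dc6 A := by
    have hc := l.cflip ((A ⊞ A) ⊞ (A ⊞ A)) =≫ (biprod.snd ≫ biprod.snd)
    simp only [Category.assoc, canFlip, biprod.lift_snd_assoc, biprod.lift_snd,
      biprod.map_snd_assoc] at hc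
    rw [reassoc_of% partialOf_comp_partialOf, lam_snd_map, reassoc_of% lam_snd_map,
      partialOf_comp_partialOf, ← Functor.map_comp_assoc]
    conv_rhs => rw [hc]
    rw [← Functor.map_comp_assoc]
    congr 2
    ext <;> simp

end BDistLaw

lemma DiffCombTrans.toBDistLaw_toDiffCombTrans {S : Monad C} (p : DiffCombTrans S) :
    p.toBDistLaw.toDiffCombTrans = p := by
  ext A : 2
  change partialOf S p.toBDistLaw A = p.d A
  rw [partialOf, toBDistLaw, map_lift_lamOf_snd,
    show biprod.desc (biprod.lift (𝟙 A) 0) (biprod.lift 0 (𝟙 A)) = 𝟙 (A ⊞ A) by ext <;> simp,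
    S.map_id, Category.comp_id]

lemma BDistLaw.toDiffCombTrans_toBDistLaw {S : Monad C} (l : BDistLaw S) :
    l.toDiffCombTrans.toBDistLaw = l := by
  ext A : 2
  change lamOf S l.toDiffCombTrans A = l.lam A
  ext
  · rw [DiffCombTrans.lamOf_fst, l.proj]
  · rw [DiffCombTrans.lamOf_snd, toDiffCombTrans, partialOf_map_desc, biprod.lift_fst_snd,
      S.map_id, Category.id_comp]

noncomputable def diffCombTransEquivBDistLaw (S : Monad C) : DiffCombTrans S ≃ BDistLaw S where
  toFun := DiffCombTrans.toBDistLaw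
  invFun := BDistLaw.toDiffCombTrans
  left_inv := DiffCombTrans.toBDistLaw_toDiffCombTrans
  right_inv := BDistLaw.toDiffCombTrans_toBDistLaw

/-- The assignments `∂ ↦ λ^∂` and `λ ↦ ∂^λ` are mutually inverse bijections between
differential combinator transformations and `𝔹`-distributive laws. -/
theorem diffCombTrans_equiv_bDistLaw (S : Monad C) :
    ∃ (F : DiffCombTrans S → BDistLaw S) (G : BDistLaw S → DiffCombTrans S),
      (∀ (p : DiffCombTrans S) (A : C), (F p).lam A = lamOf S p A) ∧
      (∀ (l : BDistLaw S) (A : C), (G l).d A = partialOf S l A) ∧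
      Function.LeftInverse G F ∧ Function.RightInverse G F :=
  ⟨diffCombTransEquivBDistLaw S, (diffCombTransEquivBDistLaw S).symm, fun _ _ => rfl,
    fun _ _ => rfl, (diffCombTransEquivBDistLaw S).left_inv,
    (diffCombTransEquivBDistLaw S).right_inv⟩
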